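/- Let Γ = (V,A) be a finite connected bipartite digraph with parts Δ, Δ', not isomorphic to the directed cycle C_4→, let G ≤ Aut(Γ) be vertex-transitive, and suppose Γ is (G,s)-arc-transitive with s ≥ 4. Let G^+ be the index-2 subgroup of G fixing Δ and Δ' setwise, and let Γ' = (Δ, A_2) be the bipartite half on Δ. Then there exists N ⊴ G^+ such that N has at least 3 orbits on Δ, the G^+-normal quotient Γ'_N is a digraph that is (G^+/N)-vertex-transitive and (G^+/N, floor(s/2))-arc-transitive, and G^+/N is quasiprimitive or bi-quasiprimitive on the set of N-orbits on Δ. -/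

import Mathlib

/-!
Both parts have at least three vertices: with at most two on each side, asymmetry forces
out-degree one and `Γ` would be `C_4→`. Take `N` maximal among the normal subgroups of `G⁺` with
at least three orbits on `Δ` (the trivial subgroup is one). A `⌊s/2⌋`-arc of `Γ'_N` lifts to one
of the bipartite half and then, through chosen midpoints, to an `s`-arc of `Γ`, so
`s`-arc-transitivity of `G` descends to `⌊s/2⌋`-arc-transitivity of `G⁺` on `Γ'_N`. If `Γ'_N`
had a 2-cycle `W ⇄ W'`, its 2-arc-transitivity would carry `W → W' → W` onto every 2-arc, so
`{W, W'}` would be closed under adjacency and, `Γ` being connected, would contain every orbit.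
Maximality of `N` is exactly (bi-)quasiprimitivity of `G⁺/N` on the orbits.
-/

namespace ArcTransDigraph

variable {V : Type*}

/-- The arc set of a digraph is asymmetric (in particular loopless). -/
def IsDigraph (A : V → V → Prop) : Prop := ∀ u v : V, A u v → ¬ A v u

/-- Connectivity of the underlying undirected graph. -/
def Connected (A : V → V → Prop) : Prop :=
  ∀ u v : V, Relation.ReflTransGen (fun a b => A a b ∨ A b a) u v

/-- `G` consists of automorphisms of the digraph `(V, A)`. -/
def PreservesArcs (A : V → V → Prop) (G : Subgroup (Equiv.Perm V)) : Prop :=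
  ∀ g ∈ G, ∀ u v : V, A u v → A (g u) (g v)

/-- `G` is transitive on vertices. -/
def VertexTransitive (G : Subgroup (Equiv.Perm V)) : Prop :=
  ∀ u v : V, ∃ g ∈ G, g u = v

/-- `p` is an `s`-arc of the digraph with arc set `A`. -/
def IsArcSeq (A : V → V → Prop) (s : ℕ) (p : Fin (s + 1) → V) : Prop :=
  ∀ i : Fin s, A (p i.castSucc) (p i.succ)

/-- `G` is transitive on the `s`-arcs of the digraph with arc set `A`. -/
def ArcTransitive (A : V → V → Prop) (G : Subgroup (Equiv.Perm V)) (s : ℕ) : Prop :=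
  ∀ p q : Fin (s + 1) → V, IsArcSeq A s p → IsArcSeq A s q →
    ∃ g ∈ G, ∀ i : Fin (s + 1), g (p i) = q i

/-- `N` is a subgroup of `G` which is normal in `G`. -/
def NormalIn (N G : Subgroup (Equiv.Perm V)) : Prop :=
  N ≤ G ∧ ∀ g ∈ G, ∀ x ∈ N, g * x * g⁻¹ ∈ N

/-- The digraph with arc set `B` on vertex set `α` is isomorphic to the directed cycle
`C_r→`, whose vertex set is `Z_r` with arcs `(i, i+1)`. -/
def IsoDirectedCycle {α : Type*} (B : α → α → Prop) (r : ℕ) : Prop :=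
  ∃ e : α ≃ ZMod r, ∀ a b : α, B a b ↔ e b = e a + 1

/-- `Δ, Δ'` form a bipartition of the digraph with arc set `A`. -/
def IsBipartition (A : V → V → Prop) (Δ Δ' : Set V) : Prop :=
  Disjoint Δ Δ' ∧ Δ ∪ Δ' = Set.univ ∧
    ∀ u v : V, A u v → ((u ∈ Δ ∧ v ∈ Δ') ∨ (u ∈ Δ' ∧ v ∈ Δ))

/-- The arc set `A_2` of the bipartite half of `Γ = (V,A)` on the part `Δ`. -/
def halfArc (A : V → V → Prop) (Δ Δ' : Set V) : V → V → Prop :=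
  fun u w => u ∈ Δ ∧ w ∈ Δ ∧ ∃ v ∈ Δ', A u v ∧ A v w

/-- Two points of `Δ` lie in the same `N`-orbit. -/
def deltaRel (N : Subgroup (Equiv.Perm V)) (Δ : Set V) : ↥Δ → ↥Δ → Prop :=
  fun x y => ∃ n ∈ N, n (x : V) = (y : V)

/-- The arc set of the quotient `Γ'_N` of the bipartite half `Γ' = (Δ, A₂)` by the
`N`-orbit partition of `Δ`. -/
def deltaQuotArc (A : V → V → Prop) (Δ Δ' : Set V) (N : Subgroup (Equiv.Perm V)) :
    Quot (deltaRel N Δ) → Quot (deltaRel N Δ) → Prop :=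
  fun W W' => ∃ x y : ↥Δ, Quot.mk _ x = W ∧ Quot.mk _ y = W' ∧
    halfArc A Δ Δ' (x : V) (y : V)


section ArcSeq

variable {α β : Type*} {R : α → α → Prop} {S : β → β → Prop}

lemma IsArcSeq.map {f : α → β} (hf : ∀ a b, R a b → S (f a) (f b)) {t : ℕ}
    {p : Fin (t + 1) → α} (hp : IsArcSeq R t p) : IsArcSeq S t (f ∘ p) :=
  fun i => hf _ _ (hp i)

lemma IsArcSeq.snoc {t : ℕ} {p : Fin (t + 1) → α} (hp : IsArcSeq R t p) {a : α}
    (ha : R (p (Fin.last t)) a) : IsArcSeq R (t + 1) (Fin.snoc p a) := by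
  intro i
  induction i using Fin.lastCases with
  | last => simpa using ha
  | cast j =>
    rw [Fin.succ_castSucc, Fin.snoc_castSucc, Fin.snoc_castSucc]
    exact hp j

lemma IsArcSeq.tail {t : ℕ} {p : Fin (t + 2) → α} (hp : IsArcSeq R (t + 1) p) :
    IsArcSeq R t (Fin.tail p) := fun i => by
  simpa only [Fin.tail, Fin.succ_castSucc] using hp i.succ

lemma IsArcSeq.cons {t : ℕ} {p : Fin (t + 1) → α} (hp : IsArcSeq R t p) {a : α}
    (ha : R a (p 0)) : IsArcSeq R (t + 1) (Fin.cons a p) := by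
  intro i
  induction i using Fin.cases with
  | zero => simpa using ha
  | succ j =>
    rw [← Fin.succ_castSucc, Fin.cons_succ, Fin.cons_succ]
    exact hp j

lemma IsArcSeq.exists_lift {f : α → β} (hf : Function.Surjective f)
    (hlift : ∀ b a, S b (f a) → ∃ a', f a' = b ∧ R a' a) :
    ∀ {t : ℕ} {p : Fin (t + 1) → β}, IsArcSeq S t p → ∃ u, IsArcSeq R t u ∧ f ∘ u = p
  | 0, p, _ => ⟨fun i => (hf (p i)).choose, fun i => i.elim0,
      funext fun i => (hf (p i)).choose_spec⟩
  | t + 1, p, hp => by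
    obtain ⟨u, hu, hup⟩ := IsArcSeq.exists_lift hf hlift hp.tail
    have hu0 : f (u 0) = p 1 := congrFun hup 0
    obtain ⟨a, ha, hau⟩ := hlift _ _ (hu0 ▸ hp 0)
    refine ⟨Fin.cons a u, hu.cons hau, funext fun i => ?_⟩
    induction i using Fin.cases with
    | zero => exact ha
    | succ j => exact congrFun hup j

lemma IsArcSeq.exists_interleave :
    ∀ {t : ℕ} {u : Fin (t + 1) → α}, IsArcSeq (fun a c => ∃ b, R a b ∧ R b c) t u →
      ∃ P : Fin (2 * t + 1) → α, IsArcSeq R (2 * t) P ∧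
        ∀ i : Fin (t + 1), P ⟨2 * i, by omega⟩ = u i
  | 0, u, _ => ⟨u, fun i => i.elim0, fun i => by rw [Fin.fin_one_eq_zero i]; rfl⟩
  | t + 1, u, hu => by
    obtain ⟨P, hP, hPu⟩ := IsArcSeq.exists_interleave hu.tail
    obtain ⟨b, hub, hbu⟩ := hu 0
    have hP0 : P 0 = u 1 := hPu 0
    refine ⟨Fin.cons (u 0) (Fin.cons b P), (hP.cons (hP0 ▸ hbu)).cons hub, fun i => ?_⟩
    induction i using Fin.cases with
    | zero => rfl
    | succ j =>
      have hj : (⟨2 * (j.succ : ℕ), by omega⟩ : Fin (2 * (t + 1) + 1)) =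
          Fin.succ (Fin.succ (⟨2 * j, by omega⟩ : Fin (2 * t + 1))) :=
        Fin.ext (by simp only [Fin.val_succ]; ring)
      rw [hj, Fin.cons_succ, Fin.cons_succ, hPu j]
      rfl

end ArcSeq

lemma ArcTransitive.of_succ {A : V → V → Prop} {G : Subgroup (Equiv.Perm V)}
    (hout : ∀ v, ∃ w, A v w) {t : ℕ} (hat : ArcTransitive A G (t + 1)) :
    ArcTransitive A G t := by
  choose σ hσ using hout
  intro p q hp hq
  obtain ⟨g, hg, hgpq⟩ := hat _ _ (hp.snoc (hσ _)) (hq.snoc (hσ _))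
  exact ⟨g, hg, fun i => by simpa using hgpq i.castSucc⟩

lemma ArcTransitive.mono {A : V → V → Prop} {G : Subgroup (Equiv.Perm V)}
    (hout : ∀ v, ∃ w, A v w) {s t : ℕ} (hat : ArcTransitive A G s) (hts : t ≤ s) :
    ArcTransitive A G t := by
  induction hts using Nat.decreasingInduction with
  | self => exact hat
  | of_succ k _ ih => exact ih.of_succ hout

namespace IsBipartition

variable {A : V → V → Prop} {G : Subgroup (Equiv.Perm V)} {Δ Δ' : Set V}

lemma symm (hbip : IsBipartition A Δ Δ') : IsBipartition A Δ' Δ :=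
  ⟨hbip.1.symm, Set.union_comm Δ Δ' ▸ hbip.2.1, fun u v huv => (hbip.2.2 u v huv).symm⟩

lemma mem_right_iff (hbip : IsBipartition A Δ Δ') (v : V) : v ∈ Δ' ↔ v ∉ Δ := by
  have hv : v ∈ Δ ∪ Δ' := hbip.2.1 ▸ Set.mem_univ v
  exact ⟨fun h h' => Set.disjoint_left.1 hbip.1 h' h, hv.resolve_left⟩

lemma mem_iff_not_mem_of_arc (hbip : IsBipartition A Δ Δ') {u v : V} (huv : A u v) :
    u ∈ Δ ↔ v ∉ Δ := by
  have hu := hbip.mem_right_iff u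
  have hv := hbip.mem_right_iff v
  rcases hbip.2.2 u v huv with ⟨h₁, h₂⟩ | ⟨h₁, h₂⟩ <;> tauto

lemma mem_right_of_arc (hbip : IsBipartition A Δ Δ') {u v : V} (huv : A u v) (hu : u ∈ Δ) :
    v ∈ Δ' :=
  (hbip.mem_right_iff v).2 ((hbip.mem_iff_not_mem_of_arc huv).1 hu)

lemma apply_mem_iff_congr (hbip : IsBipartition A Δ Δ') (hconn : Connected A)
    (hAut : PreservesArcs A G) {g : Equiv.Perm V} (hg : g ∈ G) (u v : V) :
    (g u ∈ Δ ↔ u ∈ Δ) ↔ (g v ∈ Δ ↔ v ∈ Δ) := by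
  induction hconn u v with
  | refl => rfl
  | tail _ hvw ih =>
    rw [ih]
    rcases hvw with hvw | hwv
    · have h := hbip.mem_iff_not_mem_of_arc hvw
      have hg := hbip.mem_iff_not_mem_of_arc (hAut g hg _ _ hvw)
      tauto
    · have h := hbip.mem_iff_not_mem_of_arc hwv
      have hg := hbip.mem_iff_not_mem_of_arc (hAut g hg _ _ hwv)
      tauto

lemma card_right_eq_card_left (hbip : IsBipartition A Δ Δ') {g : Equiv.Perm V}
    (hg : ∀ v, g v ∈ Δ ↔ v ∉ Δ) : Nat.card Δ' = Nat.card Δ :=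
  Nat.card_congr (Equiv.subtypeEquiv g fun v => by rw [hbip.mem_right_iff, hg, not_not]).symm

end IsBipartition

lemma eq_or_eq_of_card_le_two {α : Type*} [Finite α] (h : Nat.card α ≤ 2) {x y : α}
    (hxy : x ≠ y) (z : α) : z = x ∨ z = y := by
  have := Fintype.ofFinite α
  by_contra! hz
  rw [Nat.card_eq_fintype_card] at h
  exact h.not_gt (Fintype.two_lt_card_iff.2 ⟨x, y, z, hxy, hz.1.symm, hz.2.symm⟩)

lemma eq_or_eq_of_mem_of_card_le_two [Finite V] {S : Set V} (h : Nat.card S ≤ 2) {x y z : V}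
    (hx : x ∈ S) (hy : y ∈ S) (hz : z ∈ S) (hxy : x ≠ y) : z = x ∨ z = y := by
  simpa only [Subtype.ext_iff] using
    eq_or_eq_of_card_le_two h (x := ⟨x, hx⟩) (y := ⟨y, hy⟩) (by simpa using hxy) ⟨z, hz⟩

lemma isoDirectedCycle_of_minimalPeriod {A : V → V → Prop} {σ : V → V} {a : V} {r : ℕ}
    [NeZero r] (hA : ∀ x y, A x y ↔ y = σ x) (hr : Function.minimalPeriod σ a = r)
    (horbit : ∀ v, ∃ k, σ^[k] a = v) : IsoDirectedCycle A r := by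
  set f : ZMod r → V := fun k => σ^[k.val] a
  have hf_natCast : ∀ n : ℕ, f n = σ^[n] a := fun n => by
    show σ^[(n : ZMod r).val] a = _
    rw [ZMod.val_natCast, ← hr, Function.iterate_mod_minimalPeriod_eq]
  have hf_succ : ∀ k, f (k + 1) = σ (f k) := fun k => by
    rw [← ZMod.natCast_zmod_val k, ← Nat.cast_succ, hf_natCast, hf_natCast,
      Function.iterate_succ_apply']
  have hf_inj : Function.Injective f := fun i j hij => ZMod.val_injective r <|
    (Function.iterate_eq_iterate_iff_of_lt_minimalPeriod (hr ▸ i.val_lt) (hr ▸ j.val_lt)).1 hij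
  have hf_surj : Function.Surjective f := fun v =>
    let ⟨k, hk⟩ := horbit v
    ⟨k, (hf_natCast k).trans hk⟩
  have hf_bij : Function.Bijective f := ⟨hf_inj, hf_surj⟩
  refine ⟨(Equiv.ofBijective f hf_bij).symm, fun x y => ?_⟩
  obtain ⟨i, rfl⟩ := hf_surj x
  obtain ⟨j, rfl⟩ := hf_surj y
  rw [hA, ← hf_succ, hf_inj.eq_iff, Equiv.ofBijective_symm_apply_apply,
    Equiv.ofBijective_symm_apply_apply]

section SmallParts

variable [Finite V] {A : V → V → Prop} {Δ Δ' : Set V}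

lemma IsBipartition.eq_of_arc_of_arc_of_card_le_two (hdig : IsDigraph A)
    (hbip : IsBipartition A Δ Δ') {σ : V → V} (hσ : ∀ v, A v (σ v))
    (hΔ : Nat.card Δ ≤ 2) (hΔ' : Nat.card Δ' ≤ 2) {u c d : V} (hu : u ∈ Δ)
    (hc : A u c) (hd : A u d) : c = d := by
  by_contra hcd
  have hcΔ' := hbip.mem_right_of_arc hc hu
  have hdΔ' := hbip.mem_right_of_arc hd hu
  have hσc := hbip.symm.mem_right_of_arc (hσ c) hcΔ'
  have hσd := hbip.symm.mem_right_of_arc (hσ d) hdΔ'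
  have hσcu : σ c ≠ u := fun h => hdig u c hc (h ▸ hσ c)
  have hσdu : σ d ≠ u := fun h => hdig u d hd (h ▸ hσ d)
  have hw : σ d = σ c :=
    (eq_or_eq_of_mem_of_card_le_two hΔ hu hσc hσd hσcu.symm).resolve_left hσdu
  rcases eq_or_eq_of_mem_of_card_le_two hΔ' hcΔ' hdΔ'
    (hbip.mem_right_of_arc (hσ (σ c)) hσc) hcd with h | h
  · exact hdig c (σ c) (hσ c) (by simpa [h] using hσ (σ c))
  · exact hdig d (σ c) (hw ▸ hσ d) (by simpa [h] using hσ (σ c))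

lemma isoDirectedCycle_four_of_card_le_two (hdig : IsDigraph A) (hbip : IsBipartition A Δ Δ')
    (hout : ∀ v, ∃ w, A v w) {a : V} (ha : a ∈ Δ) (hΔ : Nat.card Δ ≤ 2)
    (hΔ' : Nat.card Δ' ≤ 2) : IsoDirectedCycle A 4 := by
  choose σ hσ using hout
  have hA : ∀ x y, A x y ↔ y = σ x := fun x y => by
    refine ⟨fun hxy => ?_, fun h => h ▸ hσ x⟩
    by_cases hx : x ∈ Δ
    · exact hbip.eq_of_arc_of_arc_of_card_le_two hdig hσ hΔ hΔ' hx hxy (hσ x)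
    · exact hbip.symm.eq_of_arc_of_arc_of_card_le_two hdig hσ hΔ' hΔ
        ((hbip.mem_right_iff x).2 hx) hxy (hσ x)
  have hσσ : ∀ x, σ (σ x) ≠ x := fun x h => hdig _ _ (hσ x) (by simpa [h] using hσ (σ x))
  have h1 := hbip.mem_right_of_arc (hσ a) ha
  have h2 := hbip.symm.mem_right_of_arc (hσ _) h1
  have h3 := hbip.mem_right_of_arc (hσ _) h2
  have h4 := hbip.symm.mem_right_of_arc (hσ _) h3
  have hper : σ^[4] a = a :=
    (eq_or_eq_of_mem_of_card_le_two hΔ ha h2 h4 (hσσ a).symm).resolve_right (hσσ _)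
  have hmin : Function.minimalPeriod σ a = 4 := by
    have hdvd : Function.minimalPeriod σ a ∣ 4 := Function.IsPeriodicPt.minimalPeriod_dvd hper
    have hpos : 0 < Function.minimalPeriod σ a :=
      Function.IsPeriodicPt.minimalPeriod_pos (by norm_num) hper
    have hle := Nat.le_of_dvd (by norm_num) hdvd
    have hfix := Function.iterate_minimalPeriod (f := σ) (x := a)
    interval_cases h : Function.minimalPeriod σ a
    · have hloop := hσ a
      rw [show σ a = a from hfix] at hloop
      exact (hdig a a hloop hloop).elim
    · exact (hσσ a hfix).elim
    · norm_num at hdvd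
    · rfl
  refine isoDirectedCycle_of_minimalPeriod hA hmin fun v => ?_
  by_cases hv : v ∈ Δ
  · rcases eq_or_eq_of_mem_of_card_le_two hΔ ha h2 hv (hσσ a).symm with rfl | rfl
    exacts [⟨0, rfl⟩, ⟨2, rfl⟩]
  · have h13 : σ a ≠ σ (σ (σ a)) := fun h => by
      have h4 : σ (σ (σ (σ a))) = a := hper
      exact hσσ a (by rwa [← h] at h4)
    rcases eq_or_eq_of_mem_of_card_le_two hΔ' h1 h3 ((hbip.mem_right_iff v).2 hv) h13
      with rfl | rfl
    exacts [⟨1, rfl⟩, ⟨3, rfl⟩]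

end SmallParts

def IsPartStabilizer (G Gp : Subgroup (Equiv.Perm V)) (Δ Δ' : Set V) : Prop :=
  ∀ g : Equiv.Perm V, g ∈ Gp ↔
    (g ∈ G ∧ (∀ v : V, v ∈ Δ ↔ g v ∈ Δ) ∧ (∀ v : V, v ∈ Δ' ↔ g v ∈ Δ'))

section Parts

variable {A : V → V → Prop} {G Gp : Subgroup (Equiv.Perm V)} {Δ Δ' : Set V}

lemma mem_of_apply_mem_iff (hbip : IsBipartition A Δ Δ') (hconn : Connected A)
    (hAut : PreservesArcs A G) (hGp : IsPartStabilizer G Gp Δ Δ') {g : Equiv.Perm V}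
    (hg : g ∈ G) {x : V} (hx : g x ∈ Δ ↔ x ∈ Δ) : g ∈ Gp := by
  have hΔ : ∀ v, v ∈ Δ ↔ g v ∈ Δ := fun v =>
    ((hbip.apply_mem_iff_congr hconn hAut hg x v).1 hx).symm
  refine (hGp g).2 ⟨hg, hΔ, fun v => ?_⟩
  rw [hbip.mem_right_iff, hbip.mem_right_iff, hΔ]

lemma exists_swap_of_index_eq_two (hbip : IsBipartition A Δ Δ') (hconn : Connected A)
    (hAut : PreservesArcs A G)
    (hGp : IsPartStabilizer G Gp Δ Δ') (hidx : (Gp.subgroupOf G).index = 2) :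
    ∃ g ∈ G, ∃ a ∈ Δ, ∀ v, g v ∈ Δ ↔ v ∉ Δ := by
  obtain ⟨⟨g, hg⟩, hgGp⟩ : ∃ g : G, g ∉ Gp.subgroupOf G := by
    by_contra! h
    rw [(Subgroup.eq_top_iff' _).2 h, Subgroup.index_top] at hidx
    exact absurd hidx (by norm_num)
  rw [Subgroup.mem_subgroupOf] at hgGp
  have hswap : ∀ v, g v ∈ Δ ↔ v ∉ Δ := fun v => by
    have hv : ¬ (g v ∈ Δ ↔ v ∈ Δ) := fun hv =>
      hgGp (mem_of_apply_mem_iff hbip hconn hAut hGp hg hv)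
    tauto
  obtain ⟨v, -⟩ : ∃ v, g v ≠ v := by
    by_contra! h
    exact hgGp ((Equiv.ext h : g = 1) ▸ Gp.one_mem)
  by_cases hv : v ∈ Δ
  · exact ⟨g, hg, v, hv, hswap⟩
  · exact ⟨g, hg, g v, (hswap v).2 hv, hswap⟩

lemma three_le_card_left [Finite V] (hdig : IsDigraph A) (hbip : IsBipartition A Δ Δ')
    (hnotC4 : ¬ IsoDirectedCycle A 4) (hout : ∀ v, ∃ w, A v w) {g : Equiv.Perm V}
    (hswap : ∀ v, g v ∈ Δ ↔ v ∉ Δ) {a : V} (ha : a ∈ Δ) : 3 ≤ Nat.card Δ := by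
  by_contra! h
  have hΔ' := hbip.card_right_eq_card_left hswap
  exact hnotC4 (isoDirectedCycle_four_of_card_le_two hdig hbip hout ha (by omega) (by omega))

lemma exists_arc_of_ne (hconn : Connected A) {a b : V} (hab : a ≠ b) : ∃ u v, A u v := by
  rcases (hconn a b).cases_head with rfl | ⟨c, hac | hca, -⟩
  · exact absurd rfl hab
  · exact ⟨a, c, hac⟩
  · exact ⟨c, a, hca⟩

lemma VertexTransitive.forall_exists_arc (hvt : VertexTransitive G) (hAut : PreservesArcs A G)
    {u v : V} (huv : A u v) : (∀ x, ∃ y, A x y) ∧ ∀ y, ∃ x, A x y := by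
  refine ⟨fun x => ?_, fun y => ?_⟩
  · obtain ⟨g, hg, rfl⟩ := hvt u x
    exact ⟨g v, hAut g hg u v huv⟩
  · obtain ⟨g, hg, rfl⟩ := hvt v y
    exact ⟨g u, hAut g hg u v huv⟩

end Parts

def HalfArcTransitive (A : V → V → Prop) (Δ Δ' : Set V) (H : Subgroup (Equiv.Perm V))
    (t : ℕ) : Prop :=
  ∀ u u' : Fin (t + 1) → Δ, IsArcSeq (fun x y : Δ => halfArc A Δ Δ' x y) t u →
    IsArcSeq (fun x y : Δ => halfArc A Δ Δ' x y) t u' → ∃ g ∈ H, ∀ i, g (u i) = u' i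

section HalfArc

variable {A : V → V → Prop} {G Gp : Subgroup (Equiv.Perm V)} {Δ Δ' : Set V}

lemma preservesArcs_halfArc (hAut : PreservesArcs A G) (hGp : IsPartStabilizer G Gp Δ Δ') :
    PreservesArcs (halfArc A Δ Δ') Gp := by
  rintro g hg u w ⟨hu, hw, v, hv, huv, hvw⟩
  obtain ⟨hgG, hΔ, hΔ'⟩ := (hGp g).1 hg
  exact ⟨(hΔ u).1 hu, (hΔ w).1 hw, g v, (hΔ' v).1 hv, hAut g hgG u v huv, hAut g hgG v w hvw⟩

lemma halfArcTransitive (hbip : IsBipartition A Δ Δ') (hconn : Connected A)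
    (hAut : PreservesArcs A G) (hGp : IsPartStabilizer G Gp Δ Δ') {t : ℕ}
    (hat : ArcTransitive A G (2 * t)) : HalfArcTransitive A Δ Δ' Gp t := by
  have hmid : ∀ x y : Δ, halfArc A Δ Δ' x y → ∃ v, A x v ∧ A v y :=
    fun _ _ ⟨_, _, v, _, hxv, hvy⟩ => ⟨v, hxv, hvy⟩
  intro u u' hu hu'
  obtain ⟨P, hP, hPu⟩ := (hu.map hmid).exists_interleave
  obtain ⟨Q, hQ, hQu⟩ := (hu'.map hmid).exists_interleave
  obtain ⟨g, hg, hgPQ⟩ := hat P Q hP hQ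
  have hgu : ∀ i, g (u i) = u' i := fun i => by
    simpa only [hPu, hQu, Function.comp_apply] using hgPQ ⟨2 * i, by omega⟩
  exact ⟨g, mem_of_apply_mem_iff hbip hconn hAut hGp hg (x := u 0)
    (iff_of_true (hgu 0 ▸ (u' 0).2) (u 0).2), hgu⟩

end HalfArc

lemma deltaRel_equivalence (N : Subgroup (Equiv.Perm V)) (Δ : Set V) :
    Equivalence (deltaRel N Δ) where
  refl _ := ⟨1, N.one_mem, rfl⟩
  symm := fun ⟨n, hn, hnx⟩ => ⟨n⁻¹, N.inv_mem hn, by simp [← hnx]⟩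
  trans := fun ⟨n, hn, hnx⟩ ⟨m, hm, hmy⟩ => ⟨m * n, N.mul_mem hm hn, by simp [hnx, hmy]⟩

lemma mk_eq_mk_iff {N : Subgroup (Equiv.Perm V)} {Δ : Set V} {x y : Δ} :
    Quot.mk (deltaRel N Δ) x = Quot.mk _ y ↔ deltaRel N Δ x y :=
  (deltaRel_equivalence N Δ).quot_mk_eq_iff x y

/-- The coset `gN ∈ G⁺/N`, acting on the vertices of `Γ'_N`, sends `W` to `W'`. -/
def MapsOrbit (N : Subgroup (Equiv.Perm V)) (Δ : Set V) (g : Equiv.Perm V)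
    (W W' : Quot (deltaRel N Δ)) : Prop :=
  ∀ x y : Δ, g x = y → Quot.mk _ x = W → Quot.mk _ y = W'

def QuotArcTransitive (A : V → V → Prop) (Δ Δ' : Set V) (N H : Subgroup (Equiv.Perm V))
    (t : ℕ) : Prop :=
  ∀ p q : Fin (t + 1) → Quot (deltaRel N Δ), IsArcSeq (deltaQuotArc A Δ Δ' N) t p →
    IsArcSeq (deltaQuotArc A Δ Δ' N) t q → ∃ g ∈ H, ∀ i, MapsOrbit N Δ g (p i) (q i)

section Quotient

variable {A : V → V → Prop} {H N : Subgroup (Equiv.Perm V)} {Δ Δ' : Set V}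

lemma mapsOrbit_mk (hN : NormalIn N H) {g : Equiv.Perm V} (hg : g ∈ H) {x₀ y₀ : Δ}
    (h : g x₀ = y₀) : MapsOrbit N Δ g (Quot.mk _ x₀) (Quot.mk _ y₀) := by
  intro x y hxy hx
  obtain ⟨n, hn, hnx⟩ := mk_eq_mk_iff.1 hx
  refine mk_eq_mk_iff.2 ⟨g * n * g⁻¹, hN.2 g hg n hn, ?_⟩
  simp [← h, ← hxy, hnx]

lemma exists_halfArc_of_deltaQuotArc (hN : PreservesArcs (halfArc A Δ Δ') N)
    {W : Quot (deltaRel N Δ)} {y : Δ} (h : deltaQuotArc A Δ Δ' N W (Quot.mk _ y)) :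
    ∃ x : Δ, Quot.mk _ x = W ∧ halfArc A Δ Δ' x y := by
  obtain ⟨x₀, y₀, rfl, hy₀, hxy₀⟩ := h
  obtain ⟨n, hn, hny⟩ := mk_eq_mk_iff.1 hy₀
  have hxy := hN n hn _ _ hxy₀
  rw [hny] at hxy
  exact ⟨⟨n x₀, hxy.1⟩, mk_eq_mk_iff.2 ((deltaRel_equivalence N Δ).symm ⟨n, hn, rfl⟩), hxy⟩

lemma HalfArcTransitive.quotArcTransitive {t : ℕ} (ht : HalfArcTransitive A Δ Δ' H t)
    (hN : NormalIn N H) (hNarc : PreservesArcs (halfArc A Δ Δ') N) :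
    QuotArcTransitive A Δ Δ' N H t := by
  have hlift : ∀ W (y : Δ), deltaQuotArc A Δ Δ' N W (Quot.mk _ y) →
      ∃ x : Δ, Quot.mk _ x = W ∧ halfArc A Δ Δ' x y :=
    fun _ _ => exists_halfArc_of_deltaQuotArc hNarc
  intro p q hp hq
  obtain ⟨u, hu, rfl⟩ := hp.exists_lift Quot.mk_surjective hlift
  obtain ⟨u', hu', rfl⟩ := hq.exists_lift Quot.mk_surjective hlift
  obtain ⟨g, hg, hgu⟩ := ht u u' hu hu'
  exact ⟨g, hg, fun i => mapsOrbit_mk hN hg (hgu i)⟩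

lemma QuotArcTransitive.exists_mapsOrbit (h : QuotArcTransitive A Δ Δ' N H 0)
    (W W' : Quot (deltaRel N Δ)) : ∃ g ∈ H, MapsOrbit N Δ g W W' :=
  let ⟨g, hg, hgW⟩ := h (fun _ => W) (fun _ => W') (fun i => i.elim0) (fun i => i.elim0)
  ⟨g, hg, hgW 0⟩

lemma QuotArcTransitive.eq_of_two_cycle (h : QuotArcTransitive A Δ Δ' N H 2)
    (hHΔ : ∀ g ∈ H, ∀ x ∈ Δ, g x ∈ Δ) {W W' X Y Z : Quot (deltaRel N Δ)}
    (hWW' : deltaQuotArc A Δ Δ' N W W') (hW'W : deltaQuotArc A Δ Δ' N W' W)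
    (hXY : deltaQuotArc A Δ Δ' N X Y) (hYZ : deltaQuotArc A Δ Δ' N Y Z) : Z = X := by
  obtain ⟨g, hg, hgW⟩ := h ![W, W', W] ![X, Y, Z]
    (fun i => by fin_cases i; exacts [hWW', hW'W]) (fun i => by fin_cases i; exacts [hXY, hYZ])
  obtain ⟨x, rfl⟩ := Quot.exists_rep W
  have hgx : g x ∈ Δ := hHΔ g hg x x.2
  exact (hgW 2 x ⟨g x, hgx⟩ rfl rfl).symm.trans (hgW 0 x ⟨g x, hgx⟩ rfl rfl)

lemma forall_mem_of_deltaQuotArc_closed (hbip : IsBipartition A Δ Δ') (hconn : Connected A)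
    (hout : ∀ v, ∃ w, A v w) (hin : ∀ w, ∃ v, A v w) {S : Set (Quot (deltaRel N Δ))}
    (hS : ∀ W W', deltaQuotArc A Δ Δ' N W W' → (W ∈ S ↔ W' ∈ S)) {x₀ : Δ}
    (hx₀ : Quot.mk _ x₀ ∈ S) (X : Quot (deltaRel N Δ)) : X ∈ S := by
  classical
  have hpath : ∀ (u w : Δ) {v : V}, A u v → A v w →
      (Quot.mk (deltaRel N Δ) u ∈ S ↔ Quot.mk (deltaRel N Δ) w ∈ S) := fun u w _ huv hvw =>
    hS _ _ ⟨u, w, rfl, rfl, u.2, w.2, _, hbip.mem_right_of_arc huv u.2, huv, hvw⟩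
  have hcommon : ∀ (u w : Δ) {v : V}, A u v → A w v →
      (Quot.mk (deltaRel N Δ) u ∈ S ↔ Quot.mk (deltaRel N Δ) w ∈ S) := fun u w v huv hwv => by
    obtain ⟨z, hvz⟩ := hout v
    have hz : z ∈ Δ := by
      have := hbip.mem_iff_not_mem_of_arc huv
      have := hbip.mem_iff_not_mem_of_arc hvz
      have := u.2
      tauto
    exact (hpath u ⟨z, hz⟩ huv hvz).trans (hpath w ⟨z, hz⟩ hwv hvz).symm
  choose ι hι using hin
  -- walks of `Γ` are followed in `Δ` through a chosen in-neighbour of each vertex of `Δ'`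
  let r : V → Δ := fun v =>
    if h : v ∈ Δ then ⟨v, h⟩ else ⟨ι v, (hbip.mem_iff_not_mem_of_arc (hι v)).2 h⟩
  have hstep : ∀ {v v'}, A v v' →
      (Quot.mk (deltaRel N Δ) (r v) ∈ S ↔ Quot.mk (deltaRel N Δ) (r v') ∈ S) := by
    intro v v' hvv'
    have hmem := hbip.mem_iff_not_mem_of_arc hvv'
    by_cases hv : v ∈ Δ
    · simp only [r, dif_pos hv, dif_neg (hmem.1 hv)]
      exact hcommon _ _ hvv' (hι v')
    · simp only [r, dif_neg hv, dif_pos (not_not.1 (mt hmem.2 hv))]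
      exact hpath _ _ (hι v) hvv'
  have hwalk : ∀ v, Quot.mk (deltaRel N Δ) (r v) ∈ S := fun v => by
    induction hconn x₀ v with
    | refl => simpa [r] using hx₀
    | tail _ hvw ih =>
      rcases hvw with hvw | hwv
      · exact (hstep hvw).1 ih
      · exact (hstep hwv).2 ih
  obtain ⟨x, rfl⟩ := Quot.exists_rep X
  simpa [r] using hwalk x

lemma isDigraph_deltaQuotArc [Finite V] (hbip : IsBipartition A Δ Δ') (hconn : Connected A)
    (hout : ∀ v, ∃ w, A v w) (hin : ∀ w, ∃ v, A v w) (hHΔ : ∀ g ∈ H, ∀ x ∈ Δ, g x ∈ Δ)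
    (h2 : QuotArcTransitive A Δ Δ' N H 2) (h3 : 3 ≤ Nat.card (Quot (deltaRel N Δ))) :
    IsDigraph (deltaQuotArc A Δ Δ' N) := by
  intro W W' hWW' hW'W
  have hret : ∀ {X Y Z}, deltaQuotArc A Δ Δ' N X Y → deltaQuotArc A Δ Δ' N Y Z → Z = X :=
    fun hXY hYZ => h2.eq_of_two_cycle hHΔ hWW' hW'W hXY hYZ
  have hS : ∀ X Y, deltaQuotArc A Δ Δ' N X Y →
      (X ∈ ({W, W'} : Set _) ↔ Y ∈ ({W, W'} : Set _)) := by
    intro X Y hXY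
    simp only [Set.mem_insert_iff, Set.mem_singleton_iff]
    constructor
    · rintro (rfl | rfl)
      exacts [Or.inr (hret hW'W hXY), Or.inl (hret hWW' hXY)]
    · rintro (rfl | rfl)
      exacts [Or.inr (hret hXY hWW').symm, Or.inl (hret hXY hW'W).symm]
  obtain ⟨x, rfl⟩ := Quot.exists_rep W
  have hall := forall_mem_of_deltaQuotArc_closed hbip hconn hout hin hS (x₀ := x) (by simp)
  have hsurj : Function.Surjective fun b : Bool => if b then Quot.mk _ x else W' := fun X => by
    rcases hall X with h | h
    exacts [⟨true, h.symm⟩, ⟨false, h.symm⟩]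
  have := Nat.card_le_card_of_surjective _ hsurj
  rw [Nat.card_eq_fintype_card (α := Bool), Fintype.card_bool] at this
  omega

lemma exists_maximal_normalIn [Finite V] (H : Subgroup (Equiv.Perm V)) {Δ : Set V}
    (h3 : 3 ≤ Nat.card Δ) :
    ∃ N, NormalIn N H ∧ 3 ≤ Nat.card (Quot (deltaRel N Δ)) ∧
      ∀ L, NormalIn L H → N ≤ L → N ≠ L → Nat.card (Quot (deltaRel L Δ)) ≤ 2 := by
  have hmk_inj : Function.Injective (Quot.mk (deltaRel (⊥ : Subgroup (Equiv.Perm V)) Δ)) :=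
    fun x y hxy => by
      obtain ⟨n, hn, hnx⟩ := mk_eq_mk_iff.1 hxy
      rw [Subgroup.mem_bot] at hn
      subst hn
      exact Subtype.ext hnx
  have hbot : NormalIn ⊥ H ∧ 3 ≤ Nat.card (Quot (deltaRel (⊥ : Subgroup (Equiv.Perm V)) Δ)) :=
    ⟨⟨bot_le, fun g _ x hx => by simp [Subgroup.mem_bot.1 hx]⟩,
      h3.trans (Nat.card_le_card_of_injective _ hmk_inj)⟩
  obtain ⟨N, -, hN⟩ := Finite.exists_le_maximal
    (p := fun L => NormalIn L H ∧ 3 ≤ Nat.card (Quot (deltaRel L Δ))) hbot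
  refine ⟨N, hN.prop.1, hN.prop.2, fun L hL hNL hne => ?_⟩
  by_contra! h3L
  exact hne (hN.eq_of_le ⟨hL, h3L⟩ hNL)

lemma orbits_cover_of_card_le_two [Finite V] {L : Subgroup (Equiv.Perm V)} {Δ : Set V}
    (h2 : Nat.card (Quot (deltaRel L Δ)) ≤ 2) {a b : V} (ha : a ∈ Δ) (hb : b ∈ Δ)
    (hab : ¬ ∃ l ∈ L, l a = b) :
    ∀ x ∈ Δ, (∃ l ∈ L, l a = x) ∨ (∃ l ∈ L, l b = x) := by
  intro x hx
  have hne : Quot.mk (deltaRel L Δ) ⟨a, ha⟩ ≠ Quot.mk _ ⟨b, hb⟩ :=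
    fun h => hab (mk_eq_mk_iff.1 h)
  rcases eq_or_eq_of_card_le_two h2 hne (Quot.mk _ ⟨x, hx⟩) with h | h
  · exact Or.inl (mk_eq_mk_iff.1 h.symm)
  · exact Or.inr (mk_eq_mk_iff.1 h.symm)

lemma quasiprimitive_or_biquasiprimitive [Finite V] {N H : Subgroup (Equiv.Perm V)}
    {Δ : Set V} (hΔ : Δ.Nonempty)
    (hmax : ∀ L, NormalIn L H → N ≤ L → N ≠ L → Nat.card (Quot (deltaRel L Δ)) ≤ 2) :
    (∀ L : Subgroup (Equiv.Perm V), NormalIn L H → N ≤ L → N ≠ L →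
        ∀ x ∈ Δ, ∀ y ∈ Δ, ∃ l ∈ L, l x = y) ∨
      ((∀ L : Subgroup (Equiv.Perm V), NormalIn L H → N ≤ L → N ≠ L →
          ∃ a ∈ Δ, ∃ b ∈ Δ, ∀ x ∈ Δ, (∃ l ∈ L, l a = x) ∨ (∃ l ∈ L, l b = x)) ∧
        (∃ L : Subgroup (Equiv.Perm V), NormalIn L H ∧ N ≤ L ∧
          ∃ a ∈ Δ, ∃ b ∈ Δ,
            (∀ x ∈ Δ, (∃ l ∈ L, l a = x) ∨ (∃ l ∈ L, l b = x)) ∧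
            ¬ ∃ l ∈ L, l a = b)) := by
  by_cases htr : ∀ L : Subgroup (Equiv.Perm V), NormalIn L H → N ≤ L → N ≠ L →
      ∀ x ∈ Δ, ∀ y ∈ Δ, ∃ l ∈ L, l x = y
  · exact Or.inl htr
  refine Or.inr ⟨fun L hL hNL hne => ?_, ?_⟩
  · obtain ⟨a, ha⟩ := hΔ
    by_cases hLa : ∀ x ∈ Δ, ∃ l ∈ L, l a = x
    · exact ⟨a, ha, a, ha, fun x hx => Or.inl (hLa x hx)⟩
    · simp only [not_forall] at hLa
      obtain ⟨b, hb, hab⟩ := hLa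
      exact ⟨a, ha, b, hb, orbits_cover_of_card_le_two (hmax L hL hNL hne) ha hb hab⟩
  · simp only [not_forall] at htr
    obtain ⟨L, hL, hNL, hne, a, ha, b, hb, hab⟩ := htr
    exact ⟨L, hL, hNL, a, ha, b, hb,
      orbits_cover_of_card_le_two (hmax L hL hNL hne) ha hb hab, hab⟩

end Quotient

theorem bipartite_half_quasiprimitive_quotient
    [Finite V] (A : V → V → Prop) (G Gp : Subgroup (Equiv.Perm V)) (s : ℕ)
    (Δ Δ' : Set V)
    (hdig : IsDigraph A) (hconn : Connected A) (hAut : PreservesArcs A G)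
    (hvt : VertexTransitive G) (hs : 4 ≤ s) (hat : ArcTransitive A G s)
    (hbip : IsBipartition A Δ Δ')
    (hnotC4 : ¬ IsoDirectedCycle A 4)
    (hGp : ∀ g : Equiv.Perm V, g ∈ Gp ↔
      (g ∈ G ∧ (∀ v : V, v ∈ Δ ↔ g v ∈ Δ) ∧ (∀ v : V, v ∈ Δ' ↔ g v ∈ Δ')))
    (hidx : (Gp.subgroupOf G).index = 2) :
    ∃ N : Subgroup (Equiv.Perm V), NormalIn N Gp ∧
      -- N has at least 3 orbits on Δ
      3 ≤ Nat.card (Quot (deltaRel N Δ)) ∧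
      -- the quotient Γ'_N is a digraph
      IsDigraph (deltaQuotArc A Δ Δ' N) ∧
      -- the induced action of G⁺/N on Γ'_N is vertex-transitive
      (∀ W W' : Quot (deltaRel N Δ), ∃ g ∈ Gp, ∀ x y : ↥Δ,
        g (x : V) = (y : V) → Quot.mk _ x = W → Quot.mk _ y = W') ∧
      -- the induced action of G⁺/N on Γ'_N is transitive on ⌊s/2⌋-arcs
      (∀ p q : Fin (s / 2 + 1) → Quot (deltaRel N Δ),
        IsArcSeq (deltaQuotArc A Δ Δ' N) (s / 2) p →
        IsArcSeq (deltaQuotArc A Δ Δ' N) (s / 2) q →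
        ∃ g ∈ Gp, ∀ (i : Fin (s / 2 + 1)) (x y : ↥Δ),
          g (x : V) = (y : V) → Quot.mk _ x = p i → Quot.mk _ y = q i) ∧
      -- G⁺/N is quasiprimitive or bi-quasiprimitive on the set of N-orbits on Δ;
      -- its nontrivial normal subgroups are the L/N with N < L ⊴ G⁺, and for N ≤ L
      -- the L-orbits on the set of N-orbits correspond to the L-orbits on Δ
      ((∀ L : Subgroup (Equiv.Perm V), NormalIn L Gp → N ≤ L → N ≠ L →
          ∀ x ∈ Δ, ∀ y ∈ Δ, ∃ l ∈ L, l x = y) ∨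
        ((∀ L : Subgroup (Equiv.Perm V), NormalIn L Gp → N ≤ L → N ≠ L →
            ∃ a ∈ Δ, ∃ b ∈ Δ, ∀ x ∈ Δ, (∃ l ∈ L, l a = x) ∨ (∃ l ∈ L, l b = x)) ∧
          (∃ L : Subgroup (Equiv.Perm V), NormalIn L Gp ∧ N ≤ L ∧
            ∃ a ∈ Δ, ∃ b ∈ Δ,
              (∀ x ∈ Δ, (∃ l ∈ L, l a = x) ∨ (∃ l ∈ L, l b = x)) ∧
              ¬ ∃ l ∈ L, l a = b))) := by
  obtain ⟨g₀, -, a, ha, hswap⟩ := exists_swap_of_index_eq_two hbip hconn hAut hGp hidx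
  obtain ⟨u, v, huv⟩ := exists_arc_of_ne hconn fun h : a = g₀ a => (hswap a).1 (h ▸ ha) ha
  obtain ⟨hout, hin⟩ := hvt.forall_exists_arc hAut huv
  obtain ⟨N, hN, hN3, hNmax⟩ :=
    exists_maximal_normalIn Gp (three_le_card_left hdig hbip hnotC4 hout hswap ha)
  have hGpΔ : ∀ g ∈ Gp, ∀ x ∈ Δ, g x ∈ Δ := fun g hg x hx => (((hGp g).1 hg).2.1 x).1 hx
  have hNarc : PreservesArcs (halfArc A Δ Δ') N :=
    fun n hn => preservesArcs_halfArc hAut hGp n (hN.1 hn)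
  have hquot : ∀ t, 2 * t ≤ s → QuotArcTransitive A Δ Δ' N Gp t := fun t ht =>
    (halfArcTransitive hbip hconn hAut hGp (hat.mono hout ht)).quotArcTransitive hN hNarc
  exact ⟨N, hN, hN3, isDigraph_deltaQuotArc hbip hconn hout hin hGpΔ (hquot 2 (by omega)) hN3,
    (hquot 0 (Nat.zero_le _)).exists_mapsOrbit, hquot (s / 2) (Nat.mul_div_le s 2),
    quasiprimitive_or_biquasiprimitive ⟨a, ha⟩ hNmax⟩

end ArcTransDigraph
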